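/- Volume independence of the conditional expectation on even observables: let X ⊆ Λ₁ ⊆ Λ₂ ⊆ Γ with Λ₂ finite, and let A ∈ 𝔄_{Λ₁}⁺. Then 𝔼_X^{Λ₁}(A) = 𝔼_X^{Λ₂}(A). -/

import Mathlib

open scoped Classical

/-- The canonical anticommutation relations for a family `a x` of annihilation
operators in a C*-algebra. -/
def IsCAR {Γ A : Type*} [Ring A] [StarRing A] (a : Γ → A) : Prop :=
  (∀ x y, a x * a y + a y * a x = 0) ∧
  (∀ x y, star (a x) * star (a y) + star (a y) * star (a x) = 0) ∧
  (∀ x y, a x * star (a y) + star (a y) * a x = if x = y then (1 : A) else 0)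

/-- The four possible factors of a monomial at a site `x`:
`1`, `a x`, `a x *`, and `a x * a x`. -/
def carFactor {Γ A : Type*} [Ring A] [StarRing A] (a : Γ → A) (k : Fin 4) (x : Γ) : A :=
  match k with
  | 0 => 1
  | 1 => a x
  | 2 => star (a x)
  | 3 => star (a x) * a x

/-- The monomial with factor pattern `k` along the enumeration `l` of a finite set of sites. -/
def carMonomial {Γ A : Type*} [Ring A] [StarRing A] (a : Γ → A) (l : List Γ)
    (k : Γ → Fin 4) : A :=
  (l.map fun x => carFactor a (k x) x).prod

/-- The number of odd factors (`a x` or `a x *`) of the monomial with pattern `k` along `l`. -/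
def carOddCount {Γ : Type*} (l : List Γ) (k : Γ → Fin 4) : ℕ :=
  l.countP fun x => decide (k x = 1 ∨ k x = 2)

/-- `𝔄_X`: the linear span of the monomials supported in the finite set `X`. -/
def carSpan {Γ A : Type*} [Ring A] [StarRing A] [Algebra ℂ A] (a : Γ → A) (X : Finset Γ) :
    Submodule ℂ A :=
  Submodule.span ℂ {m | ∃ (l : List Γ) (k : Γ → Fin 4),
    l.Nodup ∧ l.toFinset = X ∧ m = carMonomial a l k}

/-- `𝔄_X⁺`: the linear span of the even monomials supported in the finite set `X`. -/
def carSpanEven {Γ A : Type*} [Ring A] [StarRing A] [Algebra ℂ A] (a : Γ → A) (X : Finset Γ) :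
    Submodule ℂ A :=
  Submodule.span ℂ {m | ∃ (l : List Γ) (k : Γ → Fin 4),
    l.Nodup ∧ l.toFinset = X ∧ Even (carOddCount l k) ∧ m = carMonomial a l k}

/-- The single-site unitaries `u_x^(0) = 1`, `u_x^(1) = a_x* + a_x`, `u_x^(2) = a_x* − a_x`,
`u_x^(3) = 1 − 2 a_x* a_x`. -/
def uFactor {Γ A : Type*} [Ring A] [StarRing A] (a : Γ → A) (k : Fin 4) (x : Γ) : A :=
  match k with
  | 0 => 1
  | 1 => star (a x) + a x
  | 2 => star (a x) - a x
  | 3 => 1 - 2 * (star (a x) * a x)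

/-- The unitary `u(α) = u_{x_1}^{(α(x_1))} ⋯ u_{x_n}^{(α(x_n))}` along the enumeration `l`
of `Λ ∖ X`. -/
def uProd {Γ A : Type*} [Ring A] [StarRing A] (a : Γ → A) (l : List Γ)
    (α : Fin l.length → Fin 4) : A :=
  (List.ofFn fun i => uFactor a (α i) (l.get i)).prod

/-- The conditional expectation `𝔼_X^Λ(B) = 4^{−|Λ∖X|} ∑_{α} u(α)* B u(α)`, where `l` is
an enumeration of `Λ ∖ X`. -/
noncomputable def condExp {Γ A : Type*} [Ring A] [StarRing A] [Algebra ℂ A] (a : Γ → A)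
    (l : List Γ) (B : A) : A :=
  ((4 : ℂ) ^ l.length)⁻¹ • ∑ α : Fin l.length → Fin 4, star (uProd a l α) * B * uProd a l α

/-!
`𝔼_X^Λ` is the composite of the single-site averages `B ↦ ¼ ∑ₖ u_z^(k)* B u_z^(k)` over the
sites `z ∈ Λ ∖ X`. Unitaries at distinct sites commute up to a sign, which cancels in the
conjugation, so these averages commute and `𝔼_X^Λ` does not depend on the enumeration of
`Λ ∖ X`. For `y ∉ Λ₁`, `a_y` and `a_y*` anticommute with every odd factor of a monomial in
`𝔄_{Λ₁}`, hence commute with `𝔄_{Λ₁}⁺`; so the averages over the sites of `Λ₂ ∖ Λ₁` fix `A`.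
-/
def SignCommute {A : Type*} [Ring A] (ε : ℤˣ) (d c : A) : Prop :=
  d * c = ε • (c * d)

namespace SignCommute

variable {A : Type*} [Ring A] {ε ε' : ℤˣ} {d c c' : A}

theorem one_right (d : A) : SignCommute 1 d 1 := by
  simp [SignCommute]

theorem of_add_eq_zero (h : d * c + c * d = 0) : SignCommute (-1) d c := by
  rw [SignCommute, Units.neg_smul, one_smul]
  exact eq_neg_of_add_eq_zero_left h

theorem symm (h : SignCommute ε d c) : SignCommute ε c d := by
  rw [SignCommute, h, smul_smul, Int.units_mul_self, one_smul]

theorem commute (h : SignCommute 1 d c) : Commute d c := by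
  rwa [SignCommute, one_smul] at h

theorem of_commute (h : Commute d c) : SignCommute 1 d c := by
  rw [SignCommute, one_smul]
  exact h

theorem mul_right (h : SignCommute ε d c) (h' : SignCommute ε' d c') :
    SignCommute (ε * ε') d (c * c') := by
  unfold SignCommute at *
  calc d * (c * c') = (ε • (c * d)) * c' := by rw [← mul_assoc, h]
    _ = ε • (c * (d * c')) := by rw [smul_mul_assoc, mul_assoc]
    _ = ε • (c * (ε' • (c' * d))) := by rw [h']
    _ = (ε * ε') • (c * c' * d) := by rw [mul_smul_comm, smul_smul, mul_assoc]

theorem add_right (h : SignCommute ε d c) (h' : SignCommute ε d c') :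
    SignCommute ε d (c + c') := by
  unfold SignCommute at *
  rw [mul_add, add_mul, smul_add, h, h']

theorem sub_right (h : SignCommute ε d c) (h' : SignCommute ε d c') :
    SignCommute ε d (c - c') := by
  unfold SignCommute at *
  rw [mul_sub, sub_mul, smul_sub, h, h']

theorem star_mul_conj_eq [StarRing A] (h : SignCommute ε d c) (B : A) :
    star (d * c) * B * (d * c) = star (c * d) * B * (c * d) := by
  rw [h, Units.smul_def, star_zsmul, smul_mul_assoc, smul_mul_assoc, mul_smul_comm, smul_smul,
    ← Units.val_mul, Int.units_mul_self, Units.val_one, one_smul]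

end SignCommute

-- The parity of the number of factors `a x`, `a x*` in `carFactor a k x` and in `uFactor a k x`.
def factorParity (k : Fin 4) : ℕ := if k = 1 ∨ k = 2 then 1 else 0

section Factors

variable {Γ A : Type*} [Ring A] [StarRing A] {a : Γ → A} {ε : ℤˣ} {d : A} {y : Γ}

theorem SignCommute.carFactor (h₁ : SignCommute ε d (a y))
    (h₂ : SignCommute ε d (star (a y))) (k : Fin 4) :
    SignCommute (ε ^ factorParity k) d (carFactor a k y) := by
  fin_cases k
  · simpa [factorParity, _root_.carFactor] using SignCommute.one_right d
  · simpa [factorParity, _root_.carFactor] using h₁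
  · simpa [factorParity, _root_.carFactor] using h₂
  · simpa [factorParity, _root_.carFactor, Int.units_mul_self] using h₂.mul_right h₁

theorem SignCommute.uFactor (h₁ : SignCommute ε d (a y))
    (h₂ : SignCommute ε d (star (a y))) (k : Fin 4) :
    SignCommute (ε ^ factorParity k) d (uFactor a k y) := by
  fin_cases k
  · simpa [factorParity, _root_.uFactor] using SignCommute.one_right d
  · simpa [factorParity, _root_.uFactor] using h₂.add_right h₁
  · simpa [factorParity, _root_.uFactor] using h₂.sub_right h₁
  · have hn : SignCommute 1 d (star (a y) * a y) := by
      simpa [Int.units_mul_self] using h₂.mul_right h₁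
    simpa [factorParity, _root_.uFactor, two_mul] using
      (SignCommute.one_right d).sub_right (hn.add_right hn)

end Factors

namespace IsCAR

variable {Γ A : Type*} [Ring A] [StarRing A] {a : Γ → A} {x y : Γ}

theorem signCommute_a_a (h : IsCAR a) : SignCommute (-1) (a x) (a y) :=
  SignCommute.of_add_eq_zero (h.1 x y)

theorem signCommute_star_star (h : IsCAR a) : SignCommute (-1) (star (a x)) (star (a y)) :=
  SignCommute.of_add_eq_zero (h.2.1 x y)

theorem signCommute_a_star (h : IsCAR a) (hxy : x ≠ y) :
    SignCommute (-1) (a x) (star (a y)) :=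
  SignCommute.of_add_eq_zero (by simpa [hxy] using h.2.2 x y)

theorem signCommute_star_a (h : IsCAR a) (hxy : x ≠ y) :
    SignCommute (-1) (star (a x)) (a y) :=
  (h.signCommute_a_star hxy.symm).symm

theorem signCommute_uFactor (h : IsCAR a) (hxy : x ≠ y) (j k : Fin 4) :
    SignCommute ((-1) ^ (factorParity j * factorParity k)) (uFactor a j x) (uFactor a k y) := by
  have hj : ∀ d ∈ ({a y, star (a y)} : Set A),
      SignCommute ((-1) ^ factorParity j) d (uFactor a j x) := by
    rintro d (rfl | rfl)
    · exact h.signCommute_a_a.uFactor (h.signCommute_a_star hxy.symm) j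
    · exact (h.signCommute_star_a hxy.symm).uFactor h.signCommute_star_star j
  rw [pow_mul]
  exact (hj _ (by simp)).symm.uFactor (hj _ (by simp)).symm k

variable [Algebra ℂ A]

theorem a_mul_self (h : IsCAR a) (x : Γ) : a x * a x = 0 := by
  have := h.1 x x
  rw [← two_smul ℂ] at this
  exact (smul_eq_zero.mp this).resolve_left two_ne_zero

theorem star_mul_self (h : IsCAR a) (x : Γ) : star (a x) * star (a x) = 0 := by
  have := h.2.1 x x
  rw [← two_smul ℂ] at this
  exact (smul_eq_zero.mp this).resolve_left two_ne_zero

theorem isStarProjection_number (h : IsCAR a) (x : Γ) :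
    IsStarProjection (star (a x) * a x) := by
  refine ⟨?_, IsSelfAdjoint.star_mul_self _⟩
  have hcomp : a x * star (a x) = 1 - star (a x) * a x :=
    eq_sub_of_add_eq (by simpa using h.2.2 x x)
  calc star (a x) * a x * (star (a x) * a x) = star (a x) * (a x * star (a x)) * a x := by
        noncomm_ring
    _ = star (a x) * a x - star (a x) * star (a x) * (a x * a x) := by
        rw [hcomp]; noncomm_ring
    _ = star (a x) * a x := by rw [h.a_mul_self, mul_zero, sub_zero]

theorem star_uFactor_mul_self (h : IsCAR a) (k : Fin 4) (x : Γ) :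
    star (uFactor a k x) * uFactor a k x = 1 := by
  have hcar : a x * star (a x) + star (a x) * a x = 1 := by simpa using h.2.2 x x
  fin_cases k
  · simp [uFactor]
  · calc star (star (a x) + a x) * (star (a x) + a x)
        = (a x * star (a x) + star (a x) * a x) + (a x * a x + star (a x) * star (a x)) := by
          simp only [star_add, star_star]; noncomm_ring
      _ = 1 := by rw [hcar, h.a_mul_self, h.star_mul_self, add_zero, add_zero]
  · calc star (star (a x) - a x) * (star (a x) - a x)
        = (a x * star (a x) + star (a x) * a x) - (a x * a x + star (a x) * star (a x)) := by
          simp only [star_sub, star_star]; noncomm_ring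
      _ = 1 := by rw [hcar, h.a_mul_self, h.star_mul_self, add_zero, sub_zero]
  · have := Unitary.star_mul_self_of_mem (h.isStarProjection_number x).two_mul_sub_one_mem_unitary
    rwa [← neg_sub, star_neg, neg_mul_neg] at this

end IsCAR

section Monomials

variable {Γ A : Type*} [Ring A] [StarRing A] {a : Γ → A}

theorem SignCommute.carMonomial {d : A} {l : List Γ}
    (hd : ∀ x ∈ l, SignCommute (-1) d (a x) ∧ SignCommute (-1) d (star (a x)))
    (k : Γ → Fin 4) :
    SignCommute ((-1) ^ carOddCount l k) d (carMonomial a l k) := by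
  induction l with
  | nil => simpa [_root_.carMonomial, carOddCount] using SignCommute.one_right d
  | cons x l ih =>
    have hx := hd x List.mem_cons_self
    have := (hx.1.carFactor hx.2 (k x)).mul_right (ih fun z hz => hd z (List.mem_cons_of_mem x hz))
    simpa [_root_.carMonomial, carOddCount, List.countP_cons, factorParity, pow_add, mul_comm]
      using this

theorem IsCAR.carSpanEven_le_centralizer [Algebra ℂ A] (h : IsCAR a) {Λ : Finset Γ} {y : Γ}
    (hy : y ∉ Λ) :
    carSpanEven a Λ ≤ Subalgebra.toSubmodule (Subalgebra.centralizer ℂ {a y, star (a y)}) := by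
  rw [carSpanEven, Submodule.span_le]
  rintro _ ⟨l, k, -, rfl, heven, rfl⟩
  have hne : ∀ x ∈ l, x ≠ y := fun x hx hxy => hy (by simpa [hxy] using hx)
  rw [SetLike.mem_coe, Subalgebra.mem_toSubmodule, Subalgebra.mem_centralizer_iff]
  rintro g hg
  have hsign : ∀ x ∈ l, SignCommute (-1) g (a x) ∧ SignCommute (-1) g (star (a x)) := by
    intro x hx
    have hxy := (hne x hx).symm
    rcases hg with rfl | rfl
    · exact ⟨h.signCommute_a_a, h.signCommute_a_star hxy⟩
    · exact ⟨h.signCommute_star_a hxy, h.signCommute_star_star⟩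
  have hm := SignCommute.carMonomial hsign k
  rw [heven.neg_one_pow] at hm
  exact hm.commute

end Monomials

theorem uProd_cons {Γ A : Type*} [Ring A] [StarRing A] (a : Γ → A) (z : Γ) (l : List Γ)
    (k : Fin 4) (β : Fin l.length → Fin 4) :
    uProd a (z :: l) (Fin.cons k β) = uFactor a k z * uProd a l β := by
  simp [uProd, List.ofFn_succ]

noncomputable def siteAverage {Γ A : Type*} [Ring A] [StarRing A] [Algebra ℂ A] (a : Γ → A)
    (z : Γ) (B : A) : A :=
  (4 : ℂ)⁻¹ • ∑ k : Fin 4, star (uFactor a k z) * B * uFactor a k z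

section Average

variable {Γ A : Type*} [Ring A] [StarRing A] [Algebra ℂ A] {a : Γ → A}

theorem condExp_nil (B : A) : condExp a [] B = B := by
  simp [condExp, uProd]

theorem condExp_cons (z : Γ) (l : List Γ) (B : A) :
    condExp a (z :: l) B = condExp a l (siteAverage a z B) := by
  have hsum : ∀ f : (Fin (l.length + 1) → Fin 4) → A,
      ∑ α, f α = ∑ k : Fin 4, ∑ β : Fin l.length → Fin 4, f (Fin.cons k β) := fun f => by
    rw [← (Fin.consEquiv fun _ => Fin 4).sum_comp, Fintype.sum_prod_type]
    rfl
  simp only [condExp, siteAverage, List.length_cons, hsum, uProd_cons, star_mul, pow_succ,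
    mul_inv, mul_smul, Finset.smul_sum, Finset.mul_sum, Finset.sum_mul, mul_smul_comm,
    smul_mul_assoc, mul_assoc]
  exact Finset.sum_comm

theorem condExp_eq_foldl (l : List Γ) (B : A) :
    condExp a l B = l.foldl (fun B z => siteAverage a z B) B := by
  induction l generalizing B with
  | nil => exact condExp_nil B
  | cons z l ih => rw [condExp_cons, ih, List.foldl_cons]

theorem siteAverage_siteAverage (x y : Γ) (B : A) :
    siteAverage a x (siteAverage a y B) = (4 : ℂ)⁻¹ • (4 : ℂ)⁻¹ • ∑ j : Fin 4, ∑ k : Fin 4,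
      star (uFactor a k y * uFactor a j x) * B * (uFactor a k y * uFactor a j x) := by
  simp only [siteAverage, star_mul, Finset.smul_sum, Finset.mul_sum, Finset.sum_mul,
    mul_smul_comm, smul_mul_assoc, mul_assoc]

theorem IsCAR.siteAverage_comm (h : IsCAR a) {x y : Γ} (hxy : x ≠ y) (B : A) :
    siteAverage a x (siteAverage a y B) = siteAverage a y (siteAverage a x B) := by
  rw [siteAverage_siteAverage, siteAverage_siteAverage, Finset.sum_comm]
  simp only [(h.signCommute_uFactor hxy.symm _ _).star_mul_conj_eq]

theorem IsCAR.condExp_perm (h : IsCAR a) {l l' : List Γ} (hl : l.Perm l') (B : A) :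
    condExp a l B = condExp a l' B := by
  rw [condExp_eq_foldl, condExp_eq_foldl]
  refine hl.foldl_eq' (fun x _ y _ C => ?_) B
  obtain rfl | hxy := eq_or_ne x y
  · rfl
  · exact h.siteAverage_comm hxy.symm C

theorem IsCAR.siteAverage_eq_self (h : IsCAR a) {y : Γ} {B : A}
    (hB : B ∈ Subalgebra.centralizer ℂ {a y, star (a y)}) : siteAverage a y B = B := by
  rw [Subalgebra.mem_centralizer_iff] at hB
  have h₁ : SignCommute 1 B (a y) := (SignCommute.of_commute (hB (a y) (by simp))).symm
  have h₂ : SignCommute 1 B (star (a y)) :=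
    (SignCommute.of_commute (hB (star (a y)) (by simp))).symm
  have hcomm (k : Fin 4) : Commute B (uFactor a k y) := by
    have hk := h₁.uFactor h₂ k
    rw [one_pow] at hk
    exact hk.commute
  have hterm (k : Fin 4) : star (uFactor a k y) * B * uFactor a k y = B := by
    rw [mul_assoc, (hcomm k).eq, ← mul_assoc, h.star_uFactor_mul_self, one_mul]
  simp only [siteAverage, hterm, Finset.sum_const, Finset.card_univ, Fintype.card_fin,
    ← Nat.cast_smul_eq_nsmul ℂ, smul_smul]
  norm_num

theorem IsCAR.condExp_append_eq (h : IsCAR a) {m : List Γ} {B : A}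
    (hm : ∀ y ∈ m, B ∈ Subalgebra.centralizer ℂ {a y, star (a y)}) (l : List Γ) :
    condExp a (m ++ l) B = condExp a l B := by
  induction m with
  | nil => rfl
  | cons y m ih =>
    rw [List.cons_append, condExp_cons, h.siteAverage_eq_self (hm y List.mem_cons_self),
      ih fun z hz => hm z (List.mem_cons_of_mem y hz)]

end Average

theorem List.perm_filter_notMem_append {α : Type*} [DecidableEq α] {l₁ l₂ : List α}
    (h₁ : l₁.Nodup) (h₂ : l₂.Nodup) (h : l₁ ⊆ l₂) :
    l₂.Perm (l₂.filter (· ∉ l₁) ++ l₁) := by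
  have hin : (l₂.filter (· ∈ l₁)).Perm l₁ :=
    (List.perm_ext_iff_of_nodup (h₂.filter _) h₁).mpr fun x => by
      simpa using fun hx => h hx
  refine (List.filter_append_perm (· ∈ l₁) l₂).symm.trans ?_
  simpa using List.perm_append_comm.trans (hin.append_left _)

theorem condExp_volume_independence_general
    {Γ A : Type*} [DecidableEq Γ]
    [NormedRing A] [StarRing A] [NormedAlgebra ℂ A]
    (a : Γ → A) (hCAR : IsCAR a)
    (X Λ₁ Λ₂ : Finset Γ) (hΛ₁Λ₂ : Λ₁ ⊆ Λ₂)
    (l₁ : List Γ) (hl₁ : l₁.Nodup) (hl₁set : l₁.toFinset = Λ₁ \ X)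
    (l₂ : List Γ) (hl₂ : l₂.Nodup) (hl₂set : l₂.toFinset = Λ₂ \ X)
    (A₀ : A) (hA : A₀ ∈ carSpanEven a Λ₁) :
    condExp a l₁ A₀ = condExp a l₂ A₀ := by
  have hmem₁ (x : Γ) : x ∈ l₁ ↔ x ∈ Λ₁ ∧ x ∉ X := by
    rw [← List.mem_toFinset, hl₁set, Finset.mem_sdiff]
  have hmem₂ (x : Γ) : x ∈ l₂ ↔ x ∈ Λ₂ ∧ x ∉ X := by
    rw [← List.mem_toFinset, hl₂set, Finset.mem_sdiff]
  have hsub : l₁ ⊆ l₂ := fun x hx => by grind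
  have houtside : ∀ y ∈ l₂.filter (· ∉ l₁), y ∉ Λ₁ := fun y hy => by grind
  rw [hCAR.condExp_perm (List.perm_filter_notMem_append hl₁ hl₂ hsub),
    hCAR.condExp_append_eq fun y hy => hCAR.carSpanEven_le_centralizer (houtside y hy) hA]

/-- volume independence of the conditional expectation on even observables:
for `X ⊆ Λ₁ ⊆ Λ₂` and `A₀ ∈ 𝔄_{Λ₁}⁺`, `𝔼_X^{Λ₁}(A₀) = 𝔼_X^{Λ₂}(A₀)`. -/
theorem condExp_volume_independence
    {Γ A : Type*} [DecidableEq Γ]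
    [NormedRing A] [StarRing A] [CStarRing A] [NormedAlgebra ℂ A]
    (a : Γ → A) (hCAR : IsCAR a)
    (X Λ₁ Λ₂ : Finset Γ) (hXΛ₁ : X ⊆ Λ₁) (hΛ₁Λ₂ : Λ₁ ⊆ Λ₂)
    (l₁ : List Γ) (hl₁ : l₁.Nodup) (hl₁set : l₁.toFinset = Λ₁ \ X)
    (l₂ : List Γ) (hl₂ : l₂.Nodup) (hl₂set : l₂.toFinset = Λ₂ \ X)
    (A₀ : A) (hA : A₀ ∈ carSpanEven a Λ₁) :
    condExp a l₁ A₀ = condExp a l₂ A₀ :=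
  condExp_volume_independence_general a hCAR X Λ₁ Λ₂ hΛ₁Λ₂ l₁ hl₁ hl₁set l₂ hl₂ hl₂set A₀ hA
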